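/- Let 0 < η < 1, m ∈ ℕ, 0 ≤ j ≤ m, and 0 < γ ≤ c₀^{-2/η} with γ < 1/2, where c₀ ≥ 1. Suppose S ⊆ D₁ ⊂ ℝ^m is such that for every β ∈ ℕ, S can be covered by at most β^Q · c₀ (c₀ γ^{-m})^Q (c₀ γ^{-j})^{β - Q} balls of radius γ^β (for a fixed Q ∈ ℕ). Then for all 0 < r < 1, Vol(T_r(S) ∩ D₁) ≤ C(m, Q, η, γ) r^{m-j-η}. -/

import Mathlib

/-!
Cover `S` by the given balls of radius `γ^β`, where `β` is chosen with `γ^(β+1) < r ≤ γ^β`;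
the doubled balls then cover `T_r(S)`, so its volume is at most the number of balls times
`(2γ^β)^m Vol(B₁)`. Since `c₀ ≤ γ^(-η/2)`, the count is at most
`β^Q γ^(ηβ/2) · γ^(-η/2 - (m-j)Q) · γ^(-β(j+η))`, and `β^Q γ^(ηβ/2)` is bounded
in `β`.
What remains is `(γ^β)^(m-j-η)`, which is comparable to `r^(m-j-η)` because `r` and `γ^β`
differ by at most a factor `γ`.
-/

open Metric MeasureTheory Module

theorem thickening_biUnion_ball_subset {α ι : Type*} [PseudoMetricSpace α] (t : Finset ι)
    (y : ι → α) (r ρ : ℝ) :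
    thickening r (⋃ i ∈ t, ball (y i) ρ) ⊆ ⋃ i ∈ t, ball (y i) (r + ρ) := by
  simp only [thickening_iUnion]
  exact Set.iUnion₂_mono fun i _ => thickening_ball (y i) r ρ

theorem measure_thickening_le_card_mul_measure_ball {E : Type*} [NormedAddCommGroup E]
    [MeasurableSpace E] [BorelSpace E] (μ : Measure E) [μ.IsAddHaarMeasure] {S : Set E}
    {t : Finset E} {ρ : ℝ} (hS : S ⊆ ⋃ y ∈ t, ball y ρ) (r : ℝ) :
    μ (thickening r S) ≤ t.card * μ (ball 0 (r + ρ)) :=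
  calc μ (thickening r S) ≤ μ (⋃ y ∈ t, ball y (r + ρ)) :=
        measure_mono ((thickening_subset_of_subset r hS).trans
          (thickening_biUnion_ball_subset t id r ρ))
    _ ≤ ∑ y ∈ t, μ (ball y (r + ρ)) := measure_biUnion_finset_le _ _
    _ = t.card * μ (ball 0 (r + ρ)) := by simp [Measure.addHaar_ball_center]

theorem pow_rpow_le_rpow_neg_abs_mul_rpow {γ r : ℝ} (hγ0 : 0 < γ) (hγ1 : γ ≤ 1) {β : ℕ}
    (hlow : γ ^ (β + 1) ≤ r) (hhigh : r ≤ γ ^ β) (d : ℝ) :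
    (γ ^ β) ^ d ≤ γ ^ (-|d|) * r ^ d := by
  have hr0 : 0 < r := (pow_pos hγ0 _).trans_le hlow
  rcases le_total 0 d with hd | hd
  · rw [abs_of_nonneg hd]
    calc (γ ^ β) ^ d = γ ^ (-d) * (γ ^ (β + 1)) ^ d := by
          rw [pow_succ, Real.mul_rpow (by positivity) hγ0.le, mul_left_comm,
            ← Real.rpow_add hγ0, neg_add_cancel, Real.rpow_zero, mul_one]
      _ ≤ γ ^ (-d) * r ^ d := by gcongr
  · calc (γ ^ β) ^ d ≤ r ^ d := Real.rpow_le_rpow_of_nonpos hr0 hhigh hd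
      _ ≤ γ ^ (-|d|) * r ^ d :=
        le_mul_of_one_le_left (by positivity)
          (Real.one_le_rpow_of_pos_of_le_one_of_nonpos hγ0 hγ1 (by simp))

theorem measure_thickening_le_rpow_of_cover {E : Type*} [NormedAddCommGroup E]
    [NormedSpace ℝ E] [MeasurableSpace E] [BorelSpace E] [FiniteDimensional ℝ E]
    (μ : Measure E) [μ.IsAddHaarMeasure] {S : Set E} {γ A s : ℝ} (hγ0 : 0 < γ)
    (hγ1 : γ < 1) (hA : 0 < A)
    (hcover : ∀ β : ℕ, ∃ t : Finset E,
      (t.card : ℝ) ≤ A * (γ ^ β) ^ (-s) ∧ S ⊆ ⋃ y ∈ t, ball y (γ ^ β)) :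
    ∃ C : ℝ, 0 < C ∧ ∀ r : ℝ, 0 < r → r < 1 →
      μ (thickening r S) ≤ ENNReal.ofReal (C * r ^ ((finrank ℝ E : ℝ) - s)) := by
  set n := finrank ℝ E
  set V := (μ (ball 0 1)).toReal
  have hV : 0 < V :=
    ENNReal.toReal_pos (measure_ball_pos μ 0 one_pos).ne' measure_ball_lt_top.ne
  refine ⟨A * 2 ^ n * V * γ ^ (-|n - s|), by positivity, fun r hr0 hr1 => ?_⟩
  obtain ⟨β, hlow, hhigh⟩ := exists_nat_pow_near_of_lt_one hr0 hr1.le hγ0 hγ1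
  obtain ⟨t, hcard, hS⟩ := hcover β
  have hball : μ (ball 0 (r + γ ^ β)) ≤ ENNReal.ofReal ((2 * γ ^ β) ^ n * V) := by
    calc μ (ball 0 (r + γ ^ β)) ≤ μ (ball 0 (2 * γ ^ β)) :=
          measure_mono (ball_subset_ball (by linarith))
      _ = ENNReal.ofReal ((2 * γ ^ β) ^ n * V) := by
        rw [Measure.addHaar_ball_of_pos μ 0 (by positivity), ENNReal.ofReal_mul (by positivity),
          ENNReal.ofReal_toReal measure_ball_lt_top.ne]
  have hreal : (t.card : ℝ) * ((2 * γ ^ β) ^ n * V) ≤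
      A * 2 ^ n * V * γ ^ (-|n - s|) * r ^ ((n : ℝ) - s) :=
    calc (t.card : ℝ) * ((2 * γ ^ β) ^ n * V)
        ≤ A * (γ ^ β) ^ (-s) * ((2 * γ ^ β) ^ n * V) := by gcongr
      _ = A * 2 ^ n * V * (γ ^ β) ^ ((n : ℝ) - s) := by
          rw [sub_eq_neg_add, Real.rpow_add (by positivity), Real.rpow_natCast]; ring
      _ ≤ A * 2 ^ n * V * (γ ^ (-|n - s|) * r ^ ((n : ℝ) - s)) := by
          gcongr; exact pow_rpow_le_rpow_neg_abs_mul_rpow hγ0 hγ1.le hlow.le hhigh _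
      _ = _ := by ring
  calc μ (thickening r S) ≤ t.card * μ (ball 0 (r + γ ^ β)) :=
        measure_thickening_le_card_mul_measure_ball μ hS r
    _ ≤ ENNReal.ofReal ((t.card : ℝ) * ((2 * γ ^ β) ^ n * V)) := by
        rw [ENNReal.ofReal_mul (by positivity), ENNReal.ofReal_natCast]; gcongr
    _ ≤ _ := ENNReal.ofReal_le_ofReal hreal

theorem le_rpow_neg_of_le_rpow_neg_inv {c γ p : ℝ} (hc : 0 < c) (hγ : 0 < γ) (hp : 0 < p)
    (h : γ ≤ c ^ (-p⁻¹)) : c ≤ γ ^ (-p) :=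
  calc c = (c ^ (-p⁻¹)) ^ (-p) := by
        rw [← Real.rpow_mul hc.le, neg_mul_neg, inv_mul_cancel₀ hp.ne', Real.rpow_one]
    _ ≤ γ ^ (-p) := Real.rpow_le_rpow_of_nonpos hγ h (neg_nonpos.2 hp.le)

theorem exists_pos_natCast_pow_mul_pow_le {a : ℝ} (ha0 : 0 ≤ a) (ha1 : a < 1) (k : ℕ) :
    ∃ K : ℝ, 0 < K ∧ ∀ n : ℕ, (n : ℝ) ^ k * a ^ n ≤ K := by
  obtain ⟨K, hK⟩ := (tendsto_pow_const_mul_const_pow_of_lt_one k ha0 ha1).bddAbove_range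
  exact ⟨max K 1, by positivity, fun n => (hK ⟨n, rfl⟩).trans (le_max_left _ _)⟩

theorem mul_pow_mul_rpow_eq {c γ : ℝ} (hc : 0 < c) (hγ : 0 < γ) (m j : ℝ) (Q β : ℕ) :
    c * (c * γ ^ (-m)) ^ Q * (c * γ ^ (-j)) ^ ((β : ℝ) - Q) =
      c ^ (β + 1) * γ ^ (-(m * Q + j * (β - Q))) := by
  have hc' : c * c ^ (Q : ℝ) * c ^ ((β : ℝ) - Q) = c ^ (β + 1) := by
    rw [mul_assoc, ← Real.rpow_add hc, add_sub_cancel, Real.rpow_natCast, pow_succ']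
  rw [mul_pow, Real.mul_rpow hc.le (by positivity), ← Real.rpow_natCast (γ ^ (-m)),
    ← Real.rpow_mul hγ.le, ← Real.rpow_mul hγ.le, ← Real.rpow_natCast c Q, neg_add,
    Real.rpow_add hγ, ← hc', neg_mul, neg_mul]
  ring

theorem cover_bound_le_mul_rpow {c γ η K : ℝ} (hc : 0 < c) (hγ : 0 < γ)
    (hcγ : c ≤ γ ^ (-(η / 2))) (m j : ℝ) (Q β : ℕ)
    (hK : (β : ℝ) ^ Q * (γ ^ (η / 2)) ^ β ≤ K) :
    (β : ℝ) ^ Q * c * (c * γ ^ (-m)) ^ Q * (c * γ ^ (-j)) ^ ((β : ℝ) - Q) ≤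
      K * γ ^ (-(η / 2) - (m - j) * Q) * (γ ^ β) ^ (-(j + η)) :=
  calc (β : ℝ) ^ Q * c * (c * γ ^ (-m)) ^ Q * (c * γ ^ (-j)) ^ ((β : ℝ) - Q)
      = (β : ℝ) ^ Q * c ^ (β + 1) * γ ^ (-(m * Q + j * (β - Q))) := by
        rw [mul_assoc _ (c ^ (β + 1)), ← mul_pow_mul_rpow_eq hc hγ]; ring
    _ ≤ (β : ℝ) ^ Q * (γ ^ (-(η / 2))) ^ (β + 1) * γ ^ (-(m * Q + j * (β - Q))) := by
        gcongr
    _ = (β : ℝ) ^ Q * (γ ^ (η / 2)) ^ β *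
          (γ ^ (-(η / 2) - (m - j) * Q) * (γ ^ β) ^ (-(j + η))) := by
        simp only [← Real.rpow_natCast, ← Real.rpow_mul hγ.le, mul_assoc,
          ← Real.rpow_add hγ]
        congr 2; push_cast; ring
    _ ≤ K * γ ^ (-(η / 2) - (m - j) * Q) * (γ ^ β) ^ (-(j + η)) := by
        rw [mul_assoc K]; gcongr

theorem stmt8_general (m j Q : ℕ) (η γ c₀ : ℝ) (hη0 : 0 < η)
    (hc₀ : 1 ≤ c₀) (hγ0 : 0 < γ) (hγc : γ ≤ c₀ ^ (-2 / η)) (hγhalf : γ < 1/2)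
    (S : Set (EuclideanSpace ℝ (Fin m)))
    (hcover : ∀ β : ℕ, ∃ t : Finset (EuclideanSpace ℝ (Fin m)),
      (t.card : ℝ) ≤ (β : ℝ) ^ Q * c₀ * (c₀ * γ ^ (-(m : ℝ))) ^ Q *
          (c₀ * γ ^ (-(j : ℝ))) ^ ((β : ℝ) - (Q : ℝ)) ∧
      S ⊆ ⋃ y ∈ t, ball y (γ ^ β)) :
    ∃ C : ℝ, 0 < C ∧ ∀ r : ℝ, 0 < r → r < 1 →
      volume (thickening r S ∩ ball (0 : EuclideanSpace ℝ (Fin m)) 1) ≤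
        ENNReal.ofReal (C * r ^ ((m : ℝ) - (j : ℝ) - η)) := by
  have hγ1 : γ < 1 := by linarith
  have hc₀γ : c₀ ≤ γ ^ (-(η / 2)) := by
    refine le_rpow_neg_of_le_rpow_neg_inv (by linarith) hγ0 (by positivity) ?_
    rwa [show -(η / 2)⁻¹ = -2 / η by field_simp]
  obtain ⟨K, hK0, hK⟩ := exists_pos_natCast_pow_mul_pow_le (Real.rpow_nonneg hγ0.le (η / 2))
    (Real.rpow_lt_one hγ0.le hγ1 (by positivity)) Q
  obtain ⟨C, hC0, hC⟩ := measure_thickening_le_rpow_of_cover volume hγ0 hγ1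
    (A := K * γ ^ (-(η / 2) - (m - j) * Q)) (s := j + η) (by positivity) fun β => by
      obtain ⟨t, hcard, hS⟩ := hcover β
      exact ⟨t, hcard.trans (cover_bound_le_mul_rpow (by linarith) hγ0 hc₀γ m j Q β (hK β)),
        hS⟩
  refine ⟨C, hC0, fun r hr0 hr1 => (measure_mono Set.inter_subset_left).trans ?_⟩
  simpa only [finrank_euclideanSpace_fin, sub_sub] using hC r hr0 hr1

/-- Let `0 < η < 1`, `0 ≤ j ≤ m`, `c₀ ≥ 1` and `0 < γ ≤ c₀^{-2/η}` with
`γ < 1/2`. If `S ⊆ D₁ ⊂ ℝ^m` can, for every `β ∈ ℕ`, be covered by at most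
`β^Q c₀ (c₀ γ^{-m})^Q (c₀ γ^{-j})^{β-Q}` balls of radius `γ^β`, then
`Vol(T_r(S) ∩ D₁) ≤ C(m,Q,η,γ) r^{m-j-η}` for all `0 < r < 1`. -/
theorem stmt8 (m j Q : ℕ) (η γ c₀ : ℝ) (hη0 : 0 < η) (hη1 : η < 1) (hjm : j ≤ m)
    (hc₀ : 1 ≤ c₀) (hγ0 : 0 < γ) (hγc : γ ≤ c₀ ^ (-2 / η)) (hγhalf : γ < 1/2)
    (S : Set (EuclideanSpace ℝ (Fin m)))
    (hS : S ⊆ ball (0 : EuclideanSpace ℝ (Fin m)) 1)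
    (hcover : ∀ β : ℕ, ∃ t : Finset (EuclideanSpace ℝ (Fin m)),
      (t.card : ℝ) ≤ (β : ℝ) ^ Q * c₀ * (c₀ * γ ^ (-(m : ℝ))) ^ Q *
          (c₀ * γ ^ (-(j : ℝ))) ^ ((β : ℝ) - (Q : ℝ)) ∧
      S ⊆ ⋃ y ∈ t, ball y (γ ^ β)) :
    ∃ C : ℝ, 0 < C ∧ ∀ r : ℝ, 0 < r → r < 1 →
      volume (thickening r S ∩ ball (0 : EuclideanSpace ℝ (Fin m)) 1) ≤
        ENNReal.ofReal (C * r ^ ((m : ℝ) - (j : ℝ) - η)) :=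
  stmt8_general m j Q η γ c₀ hη0 hc₀ hγ0 hγc hγhalf S hcover
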